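/- For every d, t ∈ ℕ with t ≤ d and every ξ ∈ 𝕋^d one has | s_t(ξ) − (1/|S_t|) Σ_{x ∈ S_t} (−1)^{Σ_{i ∈ V_ξ} x_i} | ≤ 2 · (t/d) · Σ_{i=1}^d cos²(π ξ_i). -/

import Mathlib

open Finset

noncomputable section

/-- `S_t = {x ∈ {-1,0,1}^d : Σ |x_i| = t}`. -/
def sphereS (d t : ℕ) : Finset (Fin d → ℤ) :=
  (Finset.Icc (fun _ => (-1 : ℤ)) (fun _ => (1 : ℤ))).filter fun y => ∑ i, |y i| = (t : ℤ)

/-- `s_t(ξ) = |S_t|⁻¹ Σ_{x ∈ S_t} e(x·ξ)`, where `e(y) = e^{2πiy}`. -/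
def sMul (d t : ℕ) (ξ : Fin d → ℝ) : ℂ :=
  ((sphereS d t).card : ℂ)⁻¹ *
    ∑ x ∈ sphereS d t, Complex.exp (2 * (Real.pi : ℂ) * Complex.I * ∑ k, (x k : ℂ) * (ξ k : ℂ))

/-- `V_ξ = {i ∈ {1,…,d} : cos(2π ξ_i) < 0}`. -/
def Vset (d : ℕ) (ξ : Fin d → ℝ) : Finset (Fin d) :=
  Finset.univ.filter fun i => Real.cos (2 * Real.pi * ξ i) < 0

/-!
Grouping the points of `S_t` by their support `A` (a `t`-subset of the coordinates), both
averages factor over the coordinates in `A`: `s_t(ξ)` is the average over `A` of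
`∏_{k ∈ A} cos(2πξ_k)`, and the signed average is that of `∏_{k ∈ A} σ_k`, where `σ_k = -1` on
`V_ξ` and `1` elsewhere. As `σ_k cos(2πξ_k) = |cos(2πξ_k)|`, the two products differ in absolute
value by `1 - ∏_{k ∈ A} |cos(2πξ_k)| ≤ Σ_{k ∈ A} (1 - |cos(2πξ_k)|) ≤ Σ_{k ∈ A} 2cos²(πξ_k)`.
Averaging over `A` weighs each coordinate by `C(d-1, t-1) / C(d, t) = t / d`.
-/

open Real

lemma zpow_sum₀ {ι K : Type*} [CommGroupWithZero K] {a : K} (ha : a ≠ 0) (s : Finset ι)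
    (n : ι → ℤ) : a ^ (∑ i ∈ s, n i) = ∏ i ∈ s, a ^ n i := by
  classical
  induction s using Finset.induction_on with
  | empty => simp
  | insert i s hi ih => rw [sum_insert hi, prod_insert hi, zpow_add₀ ha, ih]

lemma one_sub_prod_le_sum_one_sub {ι : Type*} (s : Finset ι) {a : ι → ℝ}
    (h0 : ∀ i ∈ s, 0 ≤ a i) (h1 : ∀ i ∈ s, a i ≤ 1) :
    1 - ∏ i ∈ s, a i ≤ ∑ i ∈ s, (1 - a i) := by
  classical
  induction s using Finset.induction_on with
  | empty => simp
  | insert i s hi ih =>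
    rw [prod_insert hi, sum_insert hi]
    have hs0 : 0 ≤ ∏ j ∈ s, a j := prod_nonneg fun j hj => h0 j (mem_insert_of_mem hj)
    have hs1 : ∏ j ∈ s, a j ≤ 1 :=
      prod_le_one (fun j hj => h0 j (mem_insert_of_mem hj)) fun j hj => h1 j (mem_insert_of_mem hj)
    have := ih (fun j hj => h0 j (mem_insert_of_mem hj)) fun j hj => h1 j (mem_insert_of_mem hj)
    nlinarith [h0 i (mem_insert_self i s), h1 i (mem_insert_self i s)]

lemma abs_prod_sub_prod_sign_le {ι : Type*} (s : Finset ι) {c σ : ι → ℝ}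
    (hσ : ∀ i ∈ s, |σ i| = 1) (hσc : ∀ i ∈ s, σ i * c i = |c i|) (hc : ∀ i ∈ s, |c i| ≤ 1) :
    |∏ i ∈ s, c i - ∏ i ∈ s, σ i| ≤ ∑ i ∈ s, (1 - |c i|) := by
  have hfactor : ∏ i ∈ s, c i = (∏ i ∈ s, σ i) * ∏ i ∈ s, |c i| := by
    rw [← prod_mul_distrib]
    refine prod_congr rfl fun i hi => ?_
    have hsq : σ i * σ i = 1 := by rw [← abs_mul_self, abs_mul, hσ i hi, one_mul]
    rw [← hσc i hi, ← mul_assoc, hsq, one_mul]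
  have hσabs : |∏ i ∈ s, σ i| = 1 := by rw [abs_prod, prod_congr rfl hσ, prod_const_one]
  have hle : ∏ i ∈ s, |c i| ≤ 1 := prod_le_one (fun i _ => abs_nonneg _) hc
  calc |∏ i ∈ s, c i - ∏ i ∈ s, σ i|
      = |∏ i ∈ s, σ i| * |∏ i ∈ s, |c i| - 1| := by rw [hfactor, ← abs_mul, mul_sub, mul_one]
    _ = 1 - ∏ i ∈ s, |c i| := by rw [hσabs, one_mul, abs_of_nonpos (sub_nonpos.2 hle), neg_sub]
    _ ≤ ∑ i ∈ s, (1 - |c i|) := one_sub_prod_le_sum_one_sub s (fun i _ => abs_nonneg _) hc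

lemma sum_powersetCard_sum {α M : Type*} [DecidableEq α] [AddCommMonoid M] (s : Finset α)
    {n : ℕ} (hn : 1 ≤ n) (f : α → M) :
    ∑ A ∈ s.powersetCard n, ∑ i ∈ A, f i = (#s - 1).choose (n - 1) • ∑ i ∈ s, f i := by
  rw [sum_comm' (t' := s) (s' := fun i => (s.powersetCard n).filter ({i} ⊆ ·))]
  · rw [smul_sum]
    refine sum_congr rfl fun i hi => ?_
    rw [sum_const, card_filter_powersetCard_subset _ _ _ (singleton_subset_iff.2 hi) (by simpa),
      card_singleton]
  · intro A i
    simp only [mem_filter, mem_powersetCard, singleton_subset_iff]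
    exact ⟨fun ⟨⟨hA, hAn⟩, hi⟩ => ⟨⟨⟨hA, hAn⟩, hi⟩, hA hi⟩, fun ⟨h, _⟩ => ⟨h.1, h.2⟩⟩

lemma choose_pred_div_choose {d t : ℕ} (ht0 : 1 ≤ t) (ht : t ≤ d) :
    ((d - 1).choose (t - 1) : ℝ) / d.choose t = t / d := by
  obtain ⟨t, rfl⟩ := Nat.exists_eq_add_of_le' ht0
  obtain ⟨d, rfl⟩ := Nat.exists_eq_add_of_le' (ht0.trans ht)
  have hC : ((d + 1).choose (t + 1) : ℝ) ≠ 0 := Nat.cast_ne_zero.2 (Nat.choose_pos ht).ne'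
  rw [div_eq_div_iff hC (by positivity), Nat.add_sub_cancel, Nat.add_sub_cancel, mul_comm]
  exact_mod_cast (Nat.add_one_mul_choose_eq d t).trans (mul_comm _ _)

lemma one_sub_abs_cos_two_mul_le (θ : ℝ) : 1 - |cos (2 * θ)| ≤ 2 * cos θ ^ 2 := by
  rw [cos_two_mul]
  linarith [neg_abs_le (2 * cos θ ^ 2 - 1)]

def sphereFiber {d : ℕ} (A : Finset (Fin d)) : Finset (Fin d → ℤ) :=
  Fintype.piFinset fun k => if k ∈ A then {-1, 1} else {0}

section sphereFiber

variable {d : ℕ} {A : Finset (Fin d)} {x : Fin d → ℤ}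

lemma mem_sphereFiber : x ∈ sphereFiber A ↔ ∀ k, |x k| = if k ∈ A then 1 else 0 := by
  simp only [sphereFiber, Fintype.mem_piFinset]
  refine forall_congr' fun k => ?_
  split_ifs
  · rw [abs_eq zero_le_one, mem_insert, mem_singleton, or_comm]
  · rw [mem_singleton, abs_eq_zero]

lemma sum_abs_of_mem_sphereFiber (hx : x ∈ sphereFiber A) : ∑ k, |x k| = #A := by
  rw [sum_congr rfl fun k _ => mem_sphereFiber.1 hx k, sum_boole, filter_mem_eq_inter, univ_inter]

lemma eq_of_mem_sphereFiber (hx : x ∈ sphereFiber A) : A = univ.filter (x · ≠ 0) := by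
  ext k
  rw [mem_filter, ← abs_ne_zero, mem_sphereFiber.1 hx k]
  split_ifs <;> simp_all

lemma mem_sphereFiber_support (hx : ∀ k, |x k| ≤ 1) :
    x ∈ sphereFiber (univ.filter (x · ≠ 0)) := by
  refine mem_sphereFiber.2 fun k => ?_
  split_ifs with hk
  · have := abs_pos.2 (mem_filter.1 hk).2
    have := hx k
    omega
  · simpa using hk

end sphereFiber

lemma mem_sphereS {d t : ℕ} {x : Fin d → ℤ} :
    x ∈ sphereS d t ↔ (∀ k, |x k| ≤ 1) ∧ ∑ k, |x k| = t := by
  simp only [sphereS, mem_filter, mem_Icc, Pi.le_def, abs_le, forall_and]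

lemma sum_sphereS_eq_sum_powersetCard {d t : ℕ} {M : Type*} [AddCommMonoid M]
    (f : (Fin d → ℤ) → M) :
    ∑ x ∈ sphereS d t, f x = ∑ A ∈ univ.powersetCard t, ∑ x ∈ sphereFiber A, f x := by
  have hsupp : ∀ x ∈ sphereS d t, univ.filter (x · ≠ 0) ∈ univ.powersetCard t := fun x hx => by
    have hcard := sum_abs_of_mem_sphereFiber (mem_sphereFiber_support (mem_sphereS.1 hx).1)
    rw [(mem_sphereS.1 hx).2] at hcard
    exact mem_powersetCard.2 ⟨subset_univ _, by exact_mod_cast hcard.symm⟩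
  rw [← sum_fiberwise_of_maps_to hsupp]
  refine sum_congr rfl fun A hA => sum_congr (ext fun x => ?_) fun _ _ => rfl
  rw [mem_filter, mem_sphereS]
  constructor
  · rintro ⟨⟨hx, -⟩, rfl⟩
    exact mem_sphereFiber_support hx
  · intro hx
    refine ⟨⟨fun k => ?_, ?_⟩, (eq_of_mem_sphereFiber hx).symm⟩
    · rw [mem_sphereFiber.1 hx k]
      split_ifs <;> norm_num
    · rw [sum_abs_of_mem_sphereFiber hx, (mem_powersetCard.1 hA).2]

lemma sum_sphereFiber_prod {d : ℕ} {R : Type*} [CommSemiring R] (A : Finset (Fin d))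
    (g : Fin d → ℤ → R) (hg : ∀ k, g k 0 = 1) :
    ∑ x ∈ sphereFiber A, ∏ k, g k (x k) = ∏ k ∈ A, (g k (-1) + g k 1) := by
  rw [sphereFiber, ← prod_univ_sum, ← Fintype.prod_ite_mem A]
  refine prod_congr rfl fun k _ => ?_
  split_ifs <;> simp [hg]

lemma sum_sphereS_prod {d t : ℕ} {R : Type*} [CommSemiring R] (g : Fin d → ℤ → R)
    (hg : ∀ k, g k 0 = 1) :
    ∑ x ∈ sphereS d t, ∏ k, g k (x k) =
      ∑ A ∈ univ.powersetCard t, ∏ k ∈ A, (g k (-1) + g k 1) := by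
  rw [sum_sphereS_eq_sum_powersetCard]
  exact sum_congr rfl fun A _ => sum_sphereFiber_prod A g hg

lemma card_sphereS (d t : ℕ) : #(sphereS d t) = d.choose t * 2 ^ t := by
  calc #(sphereS d t) = ∑ x ∈ sphereS d t, ∏ _k : Fin d, (1 : ℕ) := by simp
    _ = ∑ A ∈ univ.powersetCard t, ∏ _k ∈ A, (1 + 1) :=
      sum_sphereS_prod (fun _ _ => 1) fun _ => rfl
    _ = ∑ _A ∈ (univ : Finset (Fin d)).powersetCard t, 2 ^ t :=
      sum_congr rfl fun A hA => by rw [prod_const, (mem_powersetCard.1 hA).2]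
    _ = d.choose t * 2 ^ t := by simp

lemma average_sphereS_prod {d t : ℕ} {K : Type*} [Semifield K] (g : Fin d → ℤ → K)
    (hg : ∀ k, g k 0 = 1) :
    (#(sphereS d t) : K)⁻¹ * ∑ x ∈ sphereS d t, ∏ k, g k (x k) =
      (d.choose t : K)⁻¹ * ∑ A ∈ univ.powersetCard t, ∏ k ∈ A, (g k (-1) + g k 1) / 2 := by
  rw [sum_sphereS_prod g hg, card_sphereS, Nat.cast_mul, Nat.cast_pow, mul_inv, mul_assoc,
    mul_sum]
  congr 1
  refine sum_congr rfl fun A hA => ?_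
  rw [prod_div_distrib, prod_const, (mem_powersetCard.1 hA).2, Nat.cast_ofNat, div_eq_inv_mul]

lemma sMul_eq_average_prod_cos (d t : ℕ) (ξ : Fin d → ℝ) :
    sMul d t ξ = (((d.choose t : ℝ)⁻¹ *
      ∑ A ∈ univ.powersetCard t, ∏ k ∈ A, cos (2 * π * ξ k) : ℝ) : ℂ) := by
  have hexp : ∀ x : Fin d → ℤ,
      Complex.exp (2 * (π : ℂ) * Complex.I * ∑ k, (x k : ℂ) * (ξ k : ℂ)) =
        ∏ k, Complex.exp (2 * π * Complex.I * (x k * ξ k)) := fun x => by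
    rw [mul_sum, Complex.exp_sum]
  rw [sMul, sum_congr rfl fun x _ => hexp x,
    average_sphereS_prod (fun k m => Complex.exp (2 * π * Complex.I * (m * ξ k))) fun k => by simp]
  push_cast
  congr 1
  refine sum_congr rfl fun A _ => prod_congr rfl fun k _ => ?_
  rw [Complex.cos]
  ring_nf

lemma average_neg_one_zpow_sum {d t : ℕ} (V : Finset (Fin d)) :
    (#(sphereS d t) : ℂ)⁻¹ * ∑ x ∈ sphereS d t, (-1 : ℂ) ^ (∑ i ∈ V, x i) =
      (((d.choose t : ℝ)⁻¹ *
        ∑ A ∈ univ.powersetCard t, ∏ k ∈ A, (if k ∈ V then -1 else 1) : ℝ) : ℂ) := by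
  have hsign : ∀ x : Fin d → ℤ,
      (-1 : ℂ) ^ (∑ i ∈ V, x i) = ∏ k, if k ∈ V then (-1 : ℂ) ^ x k else 1 := fun x => by
    rw [zpow_sum₀ (by norm_num), Fintype.prod_ite_mem]
  rw [sum_congr rfl fun x _ => hsign x,
    average_sphereS_prod (fun k m => if k ∈ V then (-1 : ℂ) ^ m else 1) fun k => by simp]
  push_cast
  congr 1
  refine sum_congr rfl fun A _ => prod_congr rfl fun k _ => ?_
  split_ifs <;> norm_num

lemma abs_prod_cos_sub_prod_sign_le {d : ℕ} (ξ : Fin d → ℝ) (A : Finset (Fin d)) :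
    |∏ k ∈ A, cos (2 * π * ξ k) - ∏ k ∈ A, (if k ∈ Vset d ξ then -1 else 1)| ≤
      ∑ k ∈ A, 2 * cos (π * ξ k) ^ 2 := by
  refine (abs_prod_sub_prod_sign_le A (fun k _ => ?_) (fun k _ => ?_)
    fun k _ => abs_cos_le_one _).trans <| sum_le_sum fun k _ => ?_
  · split_ifs <;> simp
  · split_ifs with hk
    · rw [abs_of_neg (mem_filter.1 hk).2, neg_one_mul]
    · rw [abs_of_nonneg (not_lt.1 fun h => hk (mem_filter.2 ⟨mem_univ k, h⟩)), one_mul]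
  · simpa only [mul_assoc] using one_sub_abs_cos_two_mul_le (π * ξ k)

/-- Lemma 4.5: for `t ≤ d` and every `ξ ∈ 𝕋^d`,
`|s_t(ξ) - |S_t|⁻¹ Σ_{x ∈ S_t} (-1)^{Σ_{i ∈ V_ξ} x_i}| ≤ 2 (t/d) Σ cos²(π ξ_i)`. -/
theorem sMul_sub_signed_sum_bound (d t : ℕ) (ht0 : 1 ≤ t) (ht : t ≤ d) (ξ : Fin d → ℝ) :
    ‖sMul d t ξ -
        ((sphereS d t).card : ℂ)⁻¹ * ∑ x ∈ sphereS d t, (-1 : ℂ) ^ (∑ i ∈ Vset d ξ, x i)‖ ≤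
      2 * ((t : ℝ) / d) * ∑ i, Real.cos (Real.pi * ξ i) ^ 2 := by
  rw [sMul_eq_average_prod_cos, average_neg_one_zpow_sum, ← Complex.ofReal_sub,
    Complex.norm_real, norm_eq_abs, ← mul_sub, ← sum_sub_distrib, abs_mul, abs_inv, Nat.abs_cast]
  calc (d.choose t : ℝ)⁻¹ * |∑ A ∈ univ.powersetCard t,
        (∏ k ∈ A, cos (2 * π * ξ k) - ∏ k ∈ A, (if k ∈ Vset d ξ then -1 else 1))|
      ≤ (d.choose t : ℝ)⁻¹ *
          ∑ A ∈ univ.powersetCard t, ∑ k ∈ A, 2 * cos (π * ξ k) ^ 2 := by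
        gcongr
        exact (abs_sum_le_sum_abs _ _).trans
          (sum_le_sum fun A _ => abs_prod_cos_sub_prod_sign_le ξ A)
    _ = ((d - 1).choose (t - 1) : ℝ) / d.choose t * ∑ k, 2 * cos (π * ξ k) ^ 2 := by
        rw [sum_powersetCard_sum _ ht0, card_univ, Fintype.card_fin, nsmul_eq_mul]
        ring
    _ = 2 * ((t : ℝ) / d) * ∑ i, cos (π * ξ i) ^ 2 := by
        rw [choose_pred_div_choose ht0 ht, ← mul_sum]
        ring
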